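/- For x ∈ ℝ¹⁴, with the quaternion hermitian matrix A(x) built from X¹ = x¹ + x⁶i + x⁹j + x¹⁰k, X² = x² + x⁷i + x¹¹j + x¹²k, X³ = x³ + x⁸i + x¹³j + x¹⁴k as A(x) = [[x⁵ − √3·x⁴, √3·X³, √3·X²], [√3·conj(X³), x⁵ + √3·x⁴, √3·X¹], [√3·conj(X²), √3·conj(X¹), −2x⁵]], let Υ¹(x) = (1/2)det₁A(x) and Υ²(x) = (1/2)det₂A(x). Let σ: ℝ¹⁴ → ℝ¹⁴ be the linear map diag(1,1,1,1,1,−1,−1,…,−1) which fixes x¹,…,x⁵ and negates x⁶,…,x¹⁴. Then Υ²(x) = Υ¹(σ(x)) for all x ∈ ℝ¹⁴; i.e. the cubic forms Υ¹ and Υ² are related by the orthogonal transformation σ ∈ O(14) of determinant −1. -/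

import Mathlib

open scoped Quaternion

/-- The first real-valued Weierstrass determinant of a 3×3 hermitian quaternion matrix. -/
noncomputable def det1 (a : Fin 3 → Fin 3 → ℍ[ℝ]) : ℍ[ℝ] :=
  a 0 0 * a 1 1 * a 2 2 - a 0 1 * a 1 0 * a 2 2 - a 0 2 * a 1 1 * a 2 0
    - a 0 0 * a 1 2 * a 2 1 + a 0 2 * (a 2 1 * a 1 0) + (a 0 1 * a 1 2) * a 2 0

/-- The second real-valued Weierstrass determinant of a 3×3 hermitian quaternion matrix. -/
noncomputable def det2 (a : Fin 3 → Fin 3 → ℍ[ℝ]) : ℍ[ℝ] :=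
  a 0 0 * a 1 1 * a 2 2 - a 0 1 * a 1 0 * a 2 2 - a 0 2 * a 1 1 * a 2 0
    - a 0 0 * a 1 2 * a 2 1 + a 2 0 * (a 1 2 * a 0 1) + (a 1 0 * a 2 1) * a 0 2

/-- The quaternion `X¹ = x¹ + x⁶ i + x⁹ j + x¹⁰ k`. -/
def Xq1 (x : Fin 14 → ℝ) : ℍ[ℝ] := ⟨x 0, x 5, x 8, x 9⟩

/-- The quaternion `X² = x² + x⁷ i + x¹¹ j + x¹² k`. -/
def Xq2 (x : Fin 14 → ℝ) : ℍ[ℝ] := ⟨x 1, x 6, x 10, x 11⟩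

/-- The quaternion `X³ = x³ + x⁸ i + x¹³ j + x¹⁴ k`. -/
def Xq3 (x : Fin 14 → ℝ) : ℍ[ℝ] := ⟨x 2, x 7, x 12, x 13⟩

/-- The generic quaternion hermitian trace-free 3×3 matrix parametrized by `x ∈ ℝ¹⁴`. -/
noncomputable def A14 (x : Fin 14 → ℝ) : Fin 3 → Fin 3 → ℍ[ℝ] :=
  ![![((x 4 - Real.sqrt 3 * x 3 : ℝ) : ℍ[ℝ]),
     ((Real.sqrt 3 : ℝ) : ℍ[ℝ]) * Xq3 x,
     ((Real.sqrt 3 : ℝ) : ℍ[ℝ]) * Xq2 x],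
   ![((Real.sqrt 3 : ℝ) : ℍ[ℝ]) * star (Xq3 x),
     ((x 4 + Real.sqrt 3 * x 3 : ℝ) : ℍ[ℝ]),
     ((Real.sqrt 3 : ℝ) : ℍ[ℝ]) * Xq1 x],
   ![((Real.sqrt 3 : ℝ) : ℍ[ℝ]) * star (Xq2 x),
     ((Real.sqrt 3 : ℝ) : ℍ[ℝ]) * star (Xq1 x),
     ((-2 * x 4 : ℝ) : ℍ[ℝ])]]

/-- The cubic form `Υ¹(x) = ½ det₁ A(x)` on `ℝ¹⁴`. -/
noncomputable def Ups1 (x : Fin 14 → ℝ) : ℍ[ℝ] := ((1 / 2 : ℝ) : ℍ[ℝ]) * det1 (A14 x)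

/-- The cubic form `Υ²(x) = ½ det₂ A(x)` on `ℝ¹⁴`. -/
noncomputable def Ups2 (x : Fin 14 → ℝ) : ℍ[ℝ] := ((1 / 2 : ℝ) : ℍ[ℝ]) * det2 (A14 x)

/-- The orthogonal map `σ = diag(1,1,1,1,1,−1,…,−1) ∈ O(14)`, fixing `x¹,…,x⁵` and
negating `x⁶,…,x¹⁴`. -/
def sigma14 (x : Fin 14 → ℝ) : Fin 14 → ℝ := fun i => if (i : ℕ) < 5 then x i else -x i

/-! `σ` conjugates the quaternions `X¹, X², X³`, so `A(σx) = A(x)ᵀ`. For a hermitian matrix,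
`det₂ A = det₁ Aᵀ`: the two triple products agree verbatim, and each remaining term only swaps
`a_ij` with `a_ji = conj a_ij`, which commute, or moves a real diagonal entry. -/

open Matrix

open Quaternion in
theorem det2_eq_det1_transpose {a : Matrix (Fin 3) (Fin 3) ℍ[ℝ]} (ha : a.IsHermitian) :
    det2 a = det1 aᵀ := by
  have hnormal (i j : Fin 3) : a i j * a j i = a j i * a i j := by
    rw [← ha.apply i j]
    exact star_comm_self' (a j i)
  have hcentral (i : Fin 3) (q : ℍ[ℝ]) : Commute (a i i) q := by
    rw [star_eq_self.mp (ha.apply i i)]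
    exact coe_commute _ q
  have hdiag (i j k : Fin 3) : a j k * a i i * a k j = a k j * a i i * a j k := by
    rw [(hcentral i (a k j)).right_comm, hnormal, (hcentral i (a j k)).right_comm]
  unfold det1 det2
  simp only [transpose_apply]
  rw [hnormal 0 1, hdiag 1 0 2, mul_assoc (a 0 0) (a 1 2), hnormal 1 2, ← mul_assoc (a 0 0)]

theorem Xq1_sigma14 (x : Fin 14 → ℝ) : Xq1 (sigma14 x) = star (Xq1 x) := by
  ext <;> simp only [Quaternion.re_star, Quaternion.imI_star, Quaternion.imJ_star,
    Quaternion.imK_star] <;> simp [Xq1, sigma14]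

theorem Xq2_sigma14 (x : Fin 14 → ℝ) : Xq2 (sigma14 x) = star (Xq2 x) := by
  ext <;> simp only [Quaternion.re_star, Quaternion.imI_star, Quaternion.imJ_star,
    Quaternion.imK_star] <;> simp [Xq2, sigma14]

theorem Xq3_sigma14 (x : Fin 14 → ℝ) : Xq3 (sigma14 x) = star (Xq3 x) := by
  ext <;> simp only [Quaternion.re_star, Quaternion.imI_star, Quaternion.imJ_star,
    Quaternion.imK_star] <;> simp [Xq3, sigma14]

theorem isHermitian_A14 (x : Fin 14 → ℝ) : (of (A14 x)).IsHermitian := by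
  refine IsHermitian.ext fun i j => ?_
  fin_cases i <;> fin_cases j <;> simp [A14] <;> exact (Quaternion.coe_commutes _ _).symm

theorem A14_sigma14 (x : Fin 14 → ℝ) : A14 (sigma14 x) = (of (A14 x))ᵀ := by
  ext i j : 2
  rw [transpose_apply, of_apply]
  fin_cases i <;> fin_cases j <;> simp [A14, Xq1_sigma14, Xq2_sigma14, Xq3_sigma14, sigma14]

/-- The cubic forms `Υ¹` and `Υ²` are related by the orthogonal transformation `σ`:
`Υ²(x) = Υ¹(σ(x))` for all `x ∈ ℝ¹⁴`. -/
theorem statement5 : ∀ x : Fin 14 → ℝ, Ups2 x = Ups1 (sigma14 x) := by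
  intro x
  rw [Ups1, Ups2, A14_sigma14, ← det2_eq_det1_transpose (isHermitian_A14 x)]
  rfl
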